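/- For all real numbers p > 0 and q > 0, ∫_0^1 (x^{p-1}/ln x + x^{q-1}/(1-x)) dx = ln p - ψ(q). -/

import Mathlib

/-!
Substituting `x = e^{-u}` turns the integrand into `e^{-qu} K(u) + (e^{-qu} - e^{-pu}) / u` with
`K(u) = 1 / (1 - e^{-u}) - 1 / u ∈ [0, 1]`; the second term integrates to `log p - log q` by
Frullani's theorem. The Laplace transform `J` of `K` satisfies
`J(q) - J(q + 1) = 1/q - log (1 + 1/q)`, and so does `log q - ψ(q)` because
`ψ(q + 1) = ψ(q) + 1/q`. Their difference is thus 1-periodic, and it tends to `0` at infinity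
since `0 ≤ J(q) ≤ 1/q` and, by log-convexity of `Γ`, `log (q - 1) ≤ ψ(q) ≤ log q`.
Hence `J(q) = log q - ψ(q)`.
-/

open MeasureTheory Real intervalIntegral

/-- The digamma function `ψ(x) = Γ'(x)/Γ(x)`. -/
noncomputable def digamma (x : ℝ) : ℝ := deriv Real.Gamma x / Real.Gamma x

open Set Filter Topology

lemma abs_exp_neg_mul_sub_exp_neg_mul_le {a b u : ℝ} (hu : 0 ≤ u) :
    |exp (-(a * u)) - exp (-(b * u))| ≤ |b - a| * u * exp (-(min a b * u)) := by
  wlog hab : a ≤ b generalizing a b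
  · simpa [abs_sub_comm, min_comm] using this (le_of_not_ge hab)
  have hsplit : exp (-(a * u)) - exp (-(b * u)) = exp (-(a * u)) * (1 - exp (-((b - a) * u))) := by
    rw [mul_sub, mul_one, ← exp_add]; ring_nf
  have hle : 1 - exp (-((b - a) * u)) ≤ (b - a) * u := by
    linarith [add_one_le_exp (-((b - a) * u))]
  have hnonneg : 0 ≤ 1 - exp (-((b - a) * u)) := by
    rw [sub_nonneg, exp_le_one_iff, neg_nonpos]; exact mul_nonneg (sub_nonneg.2 hab) hu
  rw [min_eq_left hab, abs_of_nonneg (sub_nonneg.2 hab), hsplit,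
    abs_of_nonneg (mul_nonneg (exp_pos _).le hnonneg)]
  nlinarith [exp_pos (-(a * u))]

lemma integrableOn_inv_mul_exp_neg_mul_sub {a b : ℝ} (ha : 0 < a) (hb : 0 < b) :
    IntegrableOn (fun u ↦ u⁻¹ * (exp (-(a * u)) - exp (-(b * u)))) (Ioi 0) := by
  have hdom : IntegrableOn (fun u ↦ |b - a| * exp (-min a b * u)) (Ioi 0) :=
    (integrableOn_exp_mul_Ioi (neg_neg_of_pos (lt_min ha hb)) 0).const_mul _
  refine hdom.mono' (by fun_prop) ?_
  filter_upwards [ae_restrict_mem measurableSet_Ioi] with u (hu : 0 < u)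
  rw [norm_mul, norm_inv, norm_of_nonneg hu.le, norm_eq_abs, inv_mul_le_iff₀ hu, neg_mul]
  linarith [abs_exp_neg_mul_sub_exp_neg_mul_le (a := a) (b := b) hu.le]

lemma integral_inv_mul_exp_neg_mul_sub {a b : ℝ} (ha : 0 < a) (hb : 0 < b) :
    ∫ u in Ioi 0, u⁻¹ * (exp (-(a * u)) - exp (-(b * u))) = log b - log a := by
  have hcont : Continuous fun x : ℝ ↦ exp (-x) := by fun_prop
  have h := Frullani.integral_Ioi_eq (f := fun x ↦ exp (-x)) (L := 1) (R := 0)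
    (hcont.continuousOn.locallyIntegrableOn measurableSet_Ioi) ha hb
    (by simpa using (hcont.tendsto 0).mono_left nhdsWithin_le_nhds)
    tendsto_exp_neg_atTop_nhds_zero (integrableOn_inv_mul_exp_neg_mul_sub ha hb)
  simpa [log_div hb.ne' ha.ne'] using h

noncomputable def digammaKernel (u : ℝ) : ℝ := (1 - exp (-u))⁻¹ - u⁻¹

lemma one_sub_exp_neg_pos {u : ℝ} (hu : 0 < u) : 0 < 1 - exp (-u) := by
  simpa using hu

lemma digammaKernel_nonneg {u : ℝ} (hu : 0 < u) : 0 ≤ digammaKernel u := by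
  rw [digammaKernel, sub_nonneg]
  exact inv_anti₀ (one_sub_exp_neg_pos hu) (by linarith [add_one_le_exp (-u)])

lemma digammaKernel_le_one {u : ℝ} (hu : 0 < u) : digammaKernel u ≤ 1 := by
  have h := one_sub_exp_neg_pos hu
  have hexp : (u + 1) * exp (-u) ≤ 1 := by
    calc (u + 1) * exp (-u) ≤ exp u * exp (-u) := by gcongr; linarith [add_one_le_exp u]
      _ = 1 := by rw [← exp_add, add_neg_cancel, exp_zero]
  have hinv : (1 - exp (-u))⁻¹ ≤ (u + 1) / u := by
    rw [inv_le_comm₀ h (by positivity), inv_div, div_le_iff₀ (by positivity)]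
    linarith
  rw [digammaKernel, sub_le_iff_le_add]
  exact hinv.trans_eq (by field_simp)

noncomputable def laplaceDigammaKernel (q : ℝ) : ℝ :=
  ∫ u in Ioi 0, exp (-(q * u)) * digammaKernel u

lemma integrableOn_exp_neg_mul_Ioi_zero {q : ℝ} (hq : 0 < q) :
    IntegrableOn (fun u ↦ exp (-(q * u))) (Ioi 0) := by
  simpa only [neg_mul] using integrableOn_exp_mul_Ioi (neg_neg_of_pos hq) 0

lemma integrableOn_exp_neg_mul_mul_digammaKernel {q : ℝ} (hq : 0 < q) :
    IntegrableOn (fun u ↦ exp (-(q * u)) * digammaKernel u) (Ioi 0) := by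
  refine (integrableOn_exp_neg_mul_Ioi_zero hq).mono' (by unfold digammaKernel; fun_prop) ?_
  filter_upwards [ae_restrict_mem measurableSet_Ioi] with u (hu : 0 < u)
  rw [norm_mul, norm_of_nonneg (exp_pos _).le, norm_of_nonneg (digammaKernel_nonneg hu)]
  exact mul_le_of_le_one_right (exp_pos _).le (digammaKernel_le_one hu)

lemma integral_exp_neg_mul_Ioi_zero {q : ℝ} (hq : 0 < q) :
    ∫ u in Ioi 0, exp (-(q * u)) = q⁻¹ := by
  simpa [neg_mul, div_neg, neg_div] using integral_exp_mul_Ioi (neg_neg_of_pos hq) 0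

lemma laplaceDigammaKernel_nonneg (q : ℝ) : 0 ≤ laplaceDigammaKernel q :=
  setIntegral_nonneg measurableSet_Ioi fun _ hu ↦
    mul_nonneg (exp_pos _).le (digammaKernel_nonneg hu)

lemma laplaceDigammaKernel_le_inv {q : ℝ} (hq : 0 < q) : laplaceDigammaKernel q ≤ q⁻¹ := by
  rw [← integral_exp_neg_mul_Ioi_zero hq]
  exact setIntegral_mono_on (integrableOn_exp_neg_mul_mul_digammaKernel hq)
    (integrableOn_exp_neg_mul_Ioi_zero hq) measurableSet_Ioi
    fun u hu ↦ mul_le_of_le_one_right (exp_pos _).le (digammaKernel_le_one hu)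

lemma tendsto_laplaceDigammaKernel_atTop : Tendsto laplaceDigammaKernel atTop (𝓝 0) :=
  squeeze_zero' (Eventually.of_forall laplaceDigammaKernel_nonneg)
    ((eventually_gt_atTop 0).mono fun _ hq ↦ laplaceDigammaKernel_le_inv hq)
    tendsto_inv_atTop_zero

lemma laplaceDigammaKernel_sub_laplaceDigammaKernel_add_one {q : ℝ} (hq : 0 < q) :
    laplaceDigammaKernel q - laplaceDigammaKernel (q + 1) = q⁻¹ - (log (q + 1) - log q) := by
  have hq1 : 0 < q + 1 := by linarith
  have hpt : ∀ u ∈ Ioi (0 : ℝ), exp (-(q * u)) * digammaKernel u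
      - exp (-((q + 1) * u)) * digammaKernel u
      = exp (-(q * u)) - u⁻¹ * (exp (-(q * u)) - exp (-((q + 1) * u))) := by
    intro u (hu : 0 < u)
    have h := (one_sub_exp_neg_pos hu).ne'
    have hexp : exp (-((q + 1) * u)) = exp (-(q * u)) * exp (-u) := by
      rw [← exp_add]; ring_nf
    rw [digammaKernel, hexp]
    field_simp
  rw [laplaceDigammaKernel, laplaceDigammaKernel,
    ← integral_sub (integrableOn_exp_neg_mul_mul_digammaKernel hq)
      (integrableOn_exp_neg_mul_mul_digammaKernel hq1),
    setIntegral_congr_fun measurableSet_Ioi hpt,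
    integral_sub (integrableOn_exp_neg_mul_Ioi_zero hq)
      (integrableOn_inv_mul_exp_neg_mul_sub hq hq1),
    integral_exp_neg_mul_Ioi_zero hq, integral_inv_mul_exp_neg_mul_sub hq hq1]

lemma hasDerivAt_log_Gamma {x : ℝ} (hx : 0 < x) : HasDerivAt (log ∘ Gamma) (digamma x) x := by
  have hdiff : DifferentiableAt ℝ Gamma x :=
    differentiableAt_Gamma fun m ↦ by linarith [(Nat.cast_nonneg m : (0 : ℝ) ≤ m)]
  exact hdiff.hasDerivAt.log (Gamma_pos_of_pos hx).ne'

lemma log_Gamma_add_one {x : ℝ} (hx : 0 < x) :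
    log (Gamma (x + 1)) = log (Gamma x) + log x := by
  rw [Gamma_add_one hx.ne', log_mul hx.ne' (Gamma_pos_of_pos hx).ne', add_comm]

lemma digamma_add_one {x : ℝ} (hx : 0 < x) : digamma (x + 1) = digamma x + x⁻¹ := by
  have hshift : HasDerivAt (fun y ↦ log (Gamma (y + 1))) (digamma (x + 1)) x :=
    (hasDerivAt_log_Gamma (by linarith)).comp_add_const x 1
  have hsum : HasDerivAt (fun y ↦ log (Gamma (y + 1))) (digamma x + x⁻¹) x := by
    refine ((hasDerivAt_log_Gamma hx).add (hasDerivAt_log hx.ne')).congr_of_eventuallyEq ?_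
    filter_upwards [lt_mem_nhds hx] with y hy using log_Gamma_add_one hy
  exact hshift.unique hsum

lemma slope_log_Gamma {x : ℝ} (hx : 0 < x) : slope (log ∘ Gamma) x (x + 1) = log x := by
  rw [slope_def_field, Function.comp_apply, Function.comp_apply, log_Gamma_add_one hx]
  ring

lemma digamma_le_log {x : ℝ} (hx : 0 < x) : digamma x ≤ log x :=
  slope_log_Gamma hx ▸ convexOn_log_Gamma.le_slope_of_hasDerivAt hx
    (show 0 < x + 1 by linarith) (lt_add_one x) (hasDerivAt_log_Gamma hx)

lemma log_le_digamma_add_one {x : ℝ} (hx : 0 < x) : log x ≤ digamma (x + 1) :=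
  slope_log_Gamma hx ▸ convexOn_log_Gamma.slope_le_of_hasDerivAt hx
    (show 0 < x + 1 by linarith) (lt_add_one x) (hasDerivAt_log_Gamma (by linarith))

lemma tendsto_log_sub_digamma_atTop : Tendsto (fun x ↦ log x - digamma x) atTop (𝓝 0) := by
  have hlim : Tendsto (fun x : ℝ ↦ (x - 1)⁻¹) atTop (𝓝 0) :=
    tendsto_inv_atTop_zero.comp (tendsto_atTop_add_const_right _ (-1) tendsto_id)
  refine squeeze_zero' ?_ ?_ hlim
  · filter_upwards [eventually_gt_atTop 0] with x hx
    linarith [digamma_le_log hx]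
  · filter_upwards [eventually_gt_atTop 1] with x hx
    have hx1 : 0 < x - 1 := by linarith
    have hlow := log_le_digamma_add_one hx1
    rw [sub_add_cancel] at hlow
    have hlog : log x - log (x - 1) ≤ (x - 1)⁻¹ := by
      rw [← log_div (by linarith) hx1.ne']
      refine (log_le_sub_one_of_pos (div_pos (by linarith) hx1)).trans_eq ?_
      field_simp
      ring
    linarith

lemma eq_of_tendsto_atTop_of_add_one_eq {X : Type*} [TopologicalSpace X] [T2Space X]
    {f : ℝ → X} {c : X} {x : ℝ} (hf : ∀ y ≥ x, f (y + 1) = f y)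
    (hlim : Tendsto f atTop (𝓝 c)) : f x = c := by
  have hshift : ∀ n : ℕ, f (x + n) = f x := by
    intro n
    induction n with
    | zero => simp
    | succ n ih =>
      rw [Nat.cast_succ, ← add_assoc, hf _ (le_add_of_nonneg_right n.cast_nonneg), ih]
  have hseq : Tendsto (fun n : ℕ ↦ f (x + n)) atTop (𝓝 c) :=
    hlim.comp (tendsto_atTop_add_const_left _ x tendsto_natCast_atTop_atTop)
  simp only [hshift] at hseq
  exact tendsto_nhds_unique tendsto_const_nhds hseq

theorem laplaceDigammaKernel_eq_log_sub_digamma {q : ℝ} (hq : 0 < q) :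
    laplaceDigammaKernel q = log q - digamma q := by
  have hperiodic : ∀ y ≥ q, laplaceDigammaKernel (y + 1) - (log (y + 1) - digamma (y + 1))
      = laplaceDigammaKernel y - (log y - digamma y) := by
    intro y hy
    have hy0 : 0 < y := hq.trans_le hy
    linarith [laplaceDigammaKernel_sub_laplaceDigammaKernel_add_one hy0, digamma_add_one hy0]
  have hlim := tendsto_laplaceDigammaKernel_atTop.sub tendsto_log_sub_digamma_atTop
  rw [sub_zero] at hlim
  exact sub_eq_zero.1
    (eq_of_tendsto_atTop_of_add_one_eq (f := fun y ↦ laplaceDigammaKernel y - (log y - digamma y))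
      hperiodic hlim)

lemma image_exp_neg_Ioi_zero : (fun u : ℝ ↦ exp (-u)) '' Ioi 0 = Ioo 0 1 := by
  ext x
  constructor
  · rintro ⟨u, hu, rfl⟩
    exact ⟨exp_pos _, exp_lt_one_iff.2 (neg_neg_of_pos hu)⟩
  · rintro ⟨hx0, hx1⟩
    exact ⟨-log x, by simpa using log_neg hx0 hx1, by simp [exp_log hx0]⟩

lemma integral_Ioo_zero_one_eq_integral_Ioi_exp_neg {E : Type*} [NormedAddCommGroup E]
    [NormedSpace ℝ E] (g : ℝ → E) :
    ∫ x in Ioo 0 1, g x = ∫ u in Ioi 0, exp (-u) • g (exp (-u)) := by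
  rw [← image_exp_neg_Ioi_zero, integral_image_eq_integral_abs_deriv_smul measurableSet_Ioi
    (fun u _ ↦ (hasDerivAt_neg' u).exp.hasDerivWithinAt)
    (fun u _ v _ h ↦ neg_injective (exp_injective h))]
  simp

lemma integral_rpow_div_log_add_rpow_div_one_sub_eq (p q : ℝ) :
    ∫ x in (0 : ℝ)..1, (x ^ (p - 1) / log x + x ^ (q - 1) / (1 - x))
      = ∫ u in Ioi 0, (exp (-(q * u)) * digammaKernel u
          + u⁻¹ * (exp (-(q * u)) - exp (-(p * u)))) := by
  rw [integral_of_le zero_le_one, integral_Ioc_eq_integral_Ioo,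
    integral_Ioo_zero_one_eq_integral_Ioi_exp_neg]
  refine setIntegral_congr_fun measurableSet_Ioi fun u (hu : 0 < u) ↦ ?_
  have hpow (r : ℝ) : exp (-u) * exp (-u) ^ (r - 1) = exp (-(r * u)) := by
    rw [← exp_mul, ← exp_add]; ring_nf
  have h := (one_sub_exp_neg_pos hu).ne'
  simp only [smul_eq_mul, log_exp, mul_add, mul_div_assoc', hpow, digammaKernel]
  field_simp
  ring

theorem integral_rpow_div_log_add_rpow_div_one_sub (p q : ℝ) (hp : 0 < p) (hq : 0 < q) :
    ∫ x in (0 : ℝ)..1, (x ^ (p - 1) / Real.log x + x ^ (q - 1) / (1 - x))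
      = Real.log p - digamma q := by
  rw [integral_rpow_div_log_add_rpow_div_one_sub_eq,
    integral_add (integrableOn_exp_neg_mul_mul_digammaKernel hq)
      (integrableOn_inv_mul_exp_neg_mul_sub hq hp),
    integral_inv_mul_exp_neg_mul_sub hq hp, ← laplaceDigammaKernel,
    laplaceDigammaKernel_eq_log_sub_digamma hq]
  ring
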